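/- arXiv:1609.07610 — 2 statements merged into one kernel-verified Lean document; each statement's English description precedes it below -/
import Mathlib

section
/- Let m, n be positive integers, A_1,…,A_m, B_1,…,B_n, a_1,…,a_m, b_1,…,b_n be positive reals, and define L(H) = ∑_{i=1}^m A_i H^{a_i} + ∑_{j=1}^n B_j H^{−b_j}. Then for any reals 0 < H_1 ≤ H_2 there exists H with H_1 ≤ H ≤ H_2 such that L(H) ≪ ∑_{i=1}^m A_i H_1^{a_i} + ∑_{j=1}^n B_j H_2^{−b_j} + ∑_{i=1}^m ∑_{j=1}^n (A_i^{b_j} B_j^{a_i})^{1/(a_i + b_j)}, where the implied constant depends only on m and n. -/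
theorem srinivasan_lemma (m n : ℕ) (hm : 0 < m) (hn : 0 < n) :
    ∃ C : ℝ, 0 < C ∧
      ∀ (A a : Fin m → ℝ) (B b : Fin n → ℝ),
        (∀ i, 0 < A i) → (∀ i, 0 < a i) → (∀ j, 0 < B j) → (∀ j, 0 < b j) →
        ∀ H₁ H₂ : ℝ, 0 < H₁ → H₁ ≤ H₂ →
          ∃ H : ℝ, H₁ ≤ H ∧ H ≤ H₂ ∧
            (∑ i, A i * H ^ (a i)) + (∑ j, B j * H ^ (-(b j))) ≤
              C * ((∑ i, A i * H₁ ^ (a i)) + (∑ j, B j * H₂ ^ (-(b j))) +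
                ∑ i, ∑ j, (A i ^ (b j) * B j ^ (a i)) ^ (1 / (a i + b j))) := by
  have hm1 : (1 : ℝ) ≤ m := by exact_mod_cast hm
  have hn1 : (1 : ℝ) ≤ n := by exact_mod_cast hn
  refine ⟨2 * m * n, by positivity, ?_⟩
  intro A a B b hA ha hB hb H₁ H₂ hH₁ hle
  have hH₂ : (0 : ℝ) < H₂ := lt_of_lt_of_le hH₁ hle
  have hC2 : (2 : ℝ) ≤ 2 * m * n := by nlinarith
  have hT : (0 : ℝ) ≤ ∑ i, ∑ j, (A i ^ (b j) * B j ^ (a i)) ^ (1 / (a i + b j)) := by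
    apply Finset.sum_nonneg; intro i _
    apply Finset.sum_nonneg; intro j _
    have := hA i; have := hB j
    positivity
  have hF1 : (0 : ℝ) ≤ ∑ i, A i * H₁ ^ (a i) := by
    apply Finset.sum_nonneg; intro i _; have := hA i; positivity
  have hG2 : (0 : ℝ) ≤ ∑ j, B j * H₂ ^ (-(b j)) := by
    apply Finset.sum_nonneg; intro j _; have := hB j; positivity
  by_cases h1 : (∑ j, B j * H₁ ^ (-(b j))) ≤ ∑ i, A i * H₁ ^ (a i)
  · refine ⟨H₁, le_refl _, hle, ?_⟩
    have h2F : (∑ i, A i * H₁ ^ (a i)) + (∑ j, B j * H₁ ^ (-(b j)))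
        ≤ 2 * ∑ i, A i * H₁ ^ (a i) := by linarith
    calc (∑ i, A i * H₁ ^ (a i)) + (∑ j, B j * H₁ ^ (-(b j)))
        ≤ 2 * ∑ i, A i * H₁ ^ (a i) := h2F
      _ ≤ (2 * m * n) * ∑ i, A i * H₁ ^ (a i) := by nlinarith
      _ ≤ (2 * m * n) * ((∑ i, A i * H₁ ^ (a i)) + (∑ j, B j * H₂ ^ (-(b j))) +
            ∑ i, ∑ j, (A i ^ (b j) * B j ^ (a i)) ^ (1 / (a i + b j))) := by
          apply mul_le_mul_of_nonneg_left _ (by positivity)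
          linarith
  by_cases h2 : (∑ i, A i * H₂ ^ (a i)) ≤ ∑ j, B j * H₂ ^ (-(b j))
  · refine ⟨H₂, hle, le_refl _, ?_⟩
    calc (∑ i, A i * H₂ ^ (a i)) + (∑ j, B j * H₂ ^ (-(b j)))
        ≤ 2 * ∑ j, B j * H₂ ^ (-(b j)) := by linarith
      _ ≤ (2 * m * n) * ∑ j, B j * H₂ ^ (-(b j)) := by nlinarith
      _ ≤ (2 * m * n) * ((∑ i, A i * H₁ ^ (a i)) + (∑ j, B j * H₂ ^ (-(b j))) +
            ∑ i, ∑ j, (A i ^ (b j) * B j ^ (a i)) ^ (1 / (a i + b j))) := by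
          apply mul_le_mul_of_nonneg_left _ (by positivity)
          linarith
  push_neg at h1 h2
  -- IVT
  have hcont : ContinuousOn
      (fun H => (∑ i, A i * H ^ (a i)) - ∑ j, B j * H ^ (-(b j))) (Set.Icc H₁ H₂) := by
    apply ContinuousOn.sub
    · apply continuousOn_finset_sum; intro i _
      apply ContinuousOn.mul continuousOn_const
      intro x hx
      exact (Real.continuousAt_rpow_const x (a i)
        (Or.inl (ne_of_gt (lt_of_lt_of_le hH₁ hx.1)))).continuousWithinAt
    · apply continuousOn_finset_sum; intro j _
      apply ContinuousOn.mul continuousOn_const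
      intro x hx
      exact (Real.continuousAt_rpow_const x (-(b j))
        (Or.inl (ne_of_gt (lt_of_lt_of_le hH₁ hx.1)))).continuousWithinAt
  have h0mem : (0:ℝ) ∈ Set.Icc ((∑ i, A i * H₁ ^ (a i)) - ∑ j, B j * H₁ ^ (-(b j)))
      ((∑ i, A i * H₂ ^ (a i)) - ∑ j, B j * H₂ ^ (-(b j))) := ⟨by linarith, by linarith⟩
  obtain ⟨H, hHmem, hφ⟩ := intermediate_value_Icc hle hcont h0mem
  simp only at hφ
  have hGF : (∑ j, B j * H ^ (-(b j))) = ∑ i, A i * H ^ (a i) := by linarith [sub_eq_zero.mp hφ]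
  have hHpos : (0 : ℝ) < H := lt_of_lt_of_le hH₁ hHmem.1
  set V : ℝ := ∑ i, A i * H ^ (a i) with hVdef
  have hVpos : 0 < V := by
    apply Finset.sum_pos _ ⟨⟨0, hm⟩, Finset.mem_univ _⟩
    intro i _; have := hA i; positivity
  obtain ⟨i₀, -, hi₀⟩ := Finset.exists_max_image Finset.univ
    (fun i => A i * H ^ (a i)) ⟨⟨0, hm⟩, Finset.mem_univ _⟩
  obtain ⟨j₀, -, hj₀⟩ := Finset.exists_max_image Finset.univ
    (fun j => B j * H ^ (-(b j))) ⟨⟨0, hn⟩, Finset.mem_univ _⟩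
  set x : ℝ := A i₀ * H ^ (a i₀) with hxdef
  set y : ℝ := B j₀ * H ^ (-(b j₀)) with hydef
  have hxpos : 0 < x := by have := hA i₀; positivity
  have hypos : 0 < y := by have := hB j₀; positivity
  have hVmx : V ≤ m * x := by
    calc V ≤ ∑ _i : Fin m, x := Finset.sum_le_sum (fun i _ => hi₀ i (Finset.mem_univ i))
      _ = m * x := by simp [Finset.sum_const, nsmul_eq_mul]
  have hVny : V ≤ n * y := by
    calc V = ∑ j, B j * H ^ (-(b j)) := hGF.symm
      _ ≤ ∑ _j : Fin n, y :=
          Finset.sum_le_sum (fun j _ => hj₀ j (Finset.mem_univ j))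
      _ = n * y := by simp [Finset.sum_const, nsmul_eq_mul]
  set W : ℝ := V / (m * n) with hWdef
  have hWpos : 0 < W := by positivity
  have hWx : W ≤ x := by
    rw [hWdef, div_le_iff₀ (by positivity)]
    nlinarith [mul_le_mul_of_nonneg_left hn1 (le_of_lt (mul_pos (show (0:ℝ) < m by positivity) hxpos))]
  have hWy : W ≤ y := by
    rw [hWdef, div_le_iff₀ (by positivity)]
    nlinarith [mul_le_mul_of_nonneg_left hm1 (le_of_lt (mul_pos (show (0:ℝ) < n by positivity) hypos))]
  have hs : 0 < a i₀ + b j₀ := by linarith [ha i₀, hb j₀]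
  -- product identity
  have hxb : x ^ (b j₀) * y ^ (a i₀) = A i₀ ^ (b j₀) * B j₀ ^ (a i₀) := by
    have hH1 : H ^ (a i₀ * b j₀) * H ^ (-(b j₀) * a i₀) = 1 := by
      rw [← Real.rpow_add hHpos, show a i₀ * b j₀ + -(b j₀) * a i₀ = 0 by ring, Real.rpow_zero]
    rw [hxdef, hydef,
      Real.mul_rpow (hA i₀).le (Real.rpow_pos_of_pos hHpos _).le,
      Real.mul_rpow (hB j₀).le (Real.rpow_pos_of_pos hHpos _).le,
      ← Real.rpow_mul hHpos.le, ← Real.rpow_mul hHpos.le]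
    linear_combination (A i₀ ^ (b j₀) * B j₀ ^ (a i₀)) * hH1
  have hkey : W ≤ (A i₀ ^ (b j₀) * B j₀ ^ (a i₀)) ^ (1 / (a i₀ + b j₀)) := by
    rw [← hxb]
    have h3 : W ^ (b j₀) * W ^ (a i₀) ≤ x ^ (b j₀) * y ^ (a i₀) :=
      mul_le_mul (Real.rpow_le_rpow hWpos.le hWx (hb j₀).le)
        (Real.rpow_le_rpow hWpos.le hWy (ha i₀).le)
        (Real.rpow_nonneg hWpos.le _) (Real.rpow_nonneg hxpos.le _)
    calc W = (W ^ (b j₀ + a i₀)) ^ (1 / (a i₀ + b j₀)) := by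
          rw [← Real.rpow_mul hWpos.le,
            show (b j₀ + a i₀) * (1 / (a i₀ + b j₀)) = 1 by field_simp; ring,
            Real.rpow_one]
      _ ≤ (x ^ (b j₀) * y ^ (a i₀)) ^ (1 / (a i₀ + b j₀)) := by
          apply Real.rpow_le_rpow (Real.rpow_nonneg hWpos.le _) _ (by positivity)
          rw [Real.rpow_add hWpos]; exact h3
  have hT1 : (A i₀ ^ (b j₀) * B j₀ ^ (a i₀)) ^ (1 / (a i₀ + b j₀)) ≤
      ∑ i, ∑ j, (A i ^ (b j) * B j ^ (a i)) ^ (1 / (a i + b j)) := by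
    have hin : (A i₀ ^ (b j₀) * B j₀ ^ (a i₀)) ^ (1 / (a i₀ + b j₀)) ≤
        ∑ j, (A i₀ ^ (b j) * B j ^ (a i₀)) ^ (1 / (a i₀ + b j)) := by
      apply Finset.single_le_sum (fun j _ => ?_) (Finset.mem_univ j₀)
      have := hA i₀; have := hB j; positivity
    refine le_trans hin ?_
    apply Finset.single_le_sum (fun i _ => ?_) (Finset.mem_univ i₀)
    apply Finset.sum_nonneg; intro j _
    have := hA i; have := hB j; positivity
  refine ⟨H, hHmem.1, hHmem.2, ?_⟩
  have hVW : V = W * (m * n) := by rw [hWdef]; field_simp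
  calc (∑ i, A i * H ^ (a i)) + (∑ j, B j * H ^ (-(b j))) = 2 * V := by
        rw [hGF, ← hVdef]; ring
    _ = (2 * m * n) * W := by rw [hVW]; ring
    _ ≤ (2 * m * n) * ((∑ i, A i * H₁ ^ (a i)) + (∑ j, B j * H₂ ^ (-(b j))) +
          ∑ i, ∑ j, (A i ^ (b j) * B j ^ (a i)) ^ (1 / (a i + b j))) := by
        apply mul_le_mul_of_nonneg_left _ (by positivity)
        linarith [hkey.trans hT1]
end

section
/- There exists a constant C such that for all real x ≥ 2, ∑_{n ≤ 4x} d(n)² ≤ C x (log x)³, where d(n) is the number of positive divisors of n. -/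
/-!
Counting pairs of divisors,
`∑_{n ≤ N} d(n)² = ∑_{a, b ≤ N} ⌊N / lcm(a, b)⌋ ≤ N ∑_{a, b ≤ N} 1 / lcm(a, b)`.
Writing `1 / lcm(a, b) = gcd(a, b) / (a b)` and bounding `gcd(a, b)` by the sum of all common
divisors `g`, the double sum is at most `∑_{g ≤ N} g (H_N / g)² = H_N³`, where the harmonic number
`H_N` is at most `1 + log N`. With `N = ⌊4x⌋` this gives the bound with `C = 4 · 5³`.
-/

open Finset

theorem harmonic_mono : Monotone harmonic :=
  monotone_nat_of_le_succ fun n => by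
    rw [harmonic_succ]
    exact le_add_of_nonneg_right (by positivity)

theorem harmonic_nonneg (n : ℕ) : 0 ≤ harmonic n :=
  harmonic_zero ▸ harmonic_mono n.zero_le

theorem sum_inv_multiples_Icc (N : ℕ) {g : ℕ} (hg : 0 < g) :
    ∑ a ∈ Icc 1 N with g ∣ a, (a : ℝ)⁻¹ = (g : ℝ)⁻¹ * harmonic (N / g) := by
  have himage : {a ∈ Icc 1 N | g ∣ a} = (Icc 1 (N / g)).image (g * ·) := by
    ext a
    simp only [mem_filter, mem_Icc, mem_image]
    constructor
    · rintro ⟨⟨h1, h2⟩, k, rfl⟩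
      exact ⟨k, ⟨Nat.pos_of_mul_pos_left h1, (Nat.le_div_iff_mul_le hg).2 (by linarith)⟩, rfl⟩
    · rintro ⟨k, ⟨hk1, hk2⟩, rfl⟩
      exact ⟨⟨Nat.mul_pos hg hk1, by have := (Nat.le_div_iff_mul_le hg).1 hk2; linarith⟩, k, rfl⟩
  rw [himage, sum_image fun x _ y _ h => Nat.eq_of_mul_eq_mul_left hg h, harmonic_eq_sum_Icc]
  push_cast
  simp_rw [mul_inv, mul_sum]

theorem Nat.divisors_eq_filter_Icc {n N : ℕ} (hn : n ∈ Icc 1 N) :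
    n.divisors = {a ∈ Icc 1 N | a ∣ n} := by
  rw [mem_Icc] at hn
  ext a
  simp only [Nat.mem_divisors, mem_filter, mem_Icc]
  constructor
  · rintro ⟨ha, -⟩
    exact ⟨⟨Nat.pos_of_dvd_of_pos ha hn.1, (Nat.le_of_dvd hn.1 ha).trans hn.2⟩, ha⟩
  · rintro ⟨-, ha⟩
    exact ⟨ha, by omega⟩

theorem sum_sq_card_divisors_eq (N : ℕ) :
    ∑ n ∈ Icc 1 N, n.divisors.card ^ 2 = ∑ a ∈ Icc 1 N, ∑ b ∈ Icc 1 N, N / a.lcm b := by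
  have hsq : ∀ n ∈ Icc 1 N, n.divisors.card ^ 2 =
      ∑ a ∈ Icc 1 N, ∑ b ∈ Icc 1 N, if a ∣ n ∧ b ∣ n then 1 else 0 := fun n hn => by
    simp_rw [Nat.divisors_eq_filter_Icc hn, card_filter, sq, sum_mul_sum, ite_zero_mul_ite_zero,
      mul_one]
  have hcount : ∀ a b, ∑ n ∈ Icc 1 N, (if a ∣ n ∧ b ∣ n then 1 else 0) = N / a.lcm b := by
    intro a b
    simp_rw [← Nat.lcm_dvd_iff, ← card_filter]
    exact Nat.Ioc_filter_dvd_card_eq_div N _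
  rw [sum_congr rfl hsq, sum_comm]
  exact sum_congr rfl fun a _ => by rw [sum_comm]; exact sum_congr rfl fun b _ => hcount a b

theorem inv_lcm_le_sum_common_divisors (N : ℕ) {a b : ℕ} (ha : a ∈ Icc 1 N) (hb : 0 < b) :
    ((a.lcm b : ℕ) : ℝ)⁻¹ ≤
      ∑ g ∈ Icc 1 N, if g ∣ a ∧ g ∣ b then g * ((a : ℝ)⁻¹ * (b : ℝ)⁻¹) else 0 := by
  rw [mem_Icc] at ha
  have hlcm : ((a.lcm b : ℕ) : ℝ)⁻¹ = a.gcd b * ((a : ℝ)⁻¹ * (b : ℝ)⁻¹) := by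
    have hprod : (a.gcd b : ℝ) * a.lcm b = a * b := by exact_mod_cast Nat.gcd_mul_lcm a b
    have hgcd : (a.gcd b : ℝ) ≠ 0 := by exact_mod_cast (Nat.gcd_pos_of_pos_left b ha.1).ne'
    rw [← mul_inv, ← hprod, mul_inv, ← mul_assoc, mul_inv_cancel₀ hgcd, one_mul]
  have hgcd : a.gcd b ∈ Icc 1 N :=
    mem_Icc.2 ⟨Nat.gcd_pos_of_pos_left b ha.1, (Nat.gcd_le_left b ha.1).trans ha.2⟩
  rw [hlcm]
  refine (single_le_sum (fun g _ => ?_) hgcd).trans_eq' ?_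
  · split_ifs <;> positivity
  · simp [Nat.gcd_dvd_left, Nat.gcd_dvd_right]

theorem sum_inv_lcm_le (N : ℕ) :
    ∑ a ∈ Icc 1 N, ∑ b ∈ Icc 1 N, ((a.lcm b : ℕ) : ℝ)⁻¹ ≤ harmonic N ^ 3 := by
  calc ∑ a ∈ Icc 1 N, ∑ b ∈ Icc 1 N, ((a.lcm b : ℕ) : ℝ)⁻¹
      ≤ ∑ a ∈ Icc 1 N, ∑ b ∈ Icc 1 N, ∑ g ∈ Icc 1 N,
          if g ∣ a ∧ g ∣ b then g * ((a : ℝ)⁻¹ * (b : ℝ)⁻¹) else 0 :=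
        sum_le_sum fun a ha => sum_le_sum fun b hb =>
          inv_lcm_le_sum_common_divisors N ha (mem_Icc.1 hb).1
    _ = ∑ g ∈ Icc 1 N, g * (∑ a ∈ Icc 1 N with g ∣ a, (a : ℝ)⁻¹) ^ 2 := by
        rw [sum_congr rfl fun a _ => sum_comm, sum_comm]
        refine sum_congr rfl fun g _ => ?_
        simp_rw [sum_filter, sq, sum_mul_sum, mul_sum, ite_zero_mul_ite_zero, mul_ite_zero]
    _ = ∑ g ∈ Icc 1 N, (g : ℝ)⁻¹ * (harmonic (N / g) : ℝ) ^ 2 := by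
        refine sum_congr rfl fun g hg => ?_
        have hg : 0 < g := (mem_Icc.1 hg).1
        rw [sum_inv_multiples_Icc N hg]
        field_simp
    _ ≤ ∑ g ∈ Icc 1 N, (g : ℝ)⁻¹ * (harmonic N : ℝ) ^ 2 := by
        gcongr with g
        · exact_mod_cast harmonic_nonneg _
        · exact_mod_cast harmonic_mono (Nat.div_le_self N g)
    _ = harmonic N ^ 3 := by
        rw [← sum_mul, harmonic_eq_sum_Icc]
        push_cast
        ring

theorem sum_sq_card_divisors_le (N : ℕ) :
    ∑ n ∈ Icc 1 N, (n.divisors.card : ℝ) ^ 2 ≤ N * harmonic N ^ 3 :=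
  calc ∑ n ∈ Icc 1 N, (n.divisors.card : ℝ) ^ 2
      = ∑ a ∈ Icc 1 N, ∑ b ∈ Icc 1 N, ((N / a.lcm b : ℕ) : ℝ) := by
        exact_mod_cast sum_sq_card_divisors_eq N
    _ ≤ ∑ a ∈ Icc 1 N, ∑ b ∈ Icc 1 N, N * ((a.lcm b : ℕ) : ℝ)⁻¹ := by
        gcongr
        exact Nat.cast_div_le
    _ ≤ N * harmonic N ^ 3 := by
        simp_rw [← mul_sum]
        gcongr
        exact sum_inv_lcm_le N

theorem one_add_log_four_mul_le {x : ℝ} (hx : 2 ≤ x) : 1 + Real.log (4 * x) ≤ 5 * Real.log x := by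
  have hlog4 : Real.log 4 = 2 * Real.log 2 := by
    rw [show (4 : ℝ) = 2 ^ 2 by norm_num, Real.log_pow]; norm_num
  have hlog2x : Real.log 2 ≤ Real.log x := Real.log_le_log (by norm_num) hx
  rw [Real.log_mul (by norm_num) (by positivity), hlog4]
  linarith [Real.log_two_gt_d9, Real.log_two_lt_d9]

theorem divisor_squared_sum_bound :
    ∃ C : ℝ, 0 < C ∧ ∀ x : ℝ, 2 ≤ x →
      ∑ n ∈ Finset.Icc 1 ⌊4 * x⌋₊, ((n.divisors.card : ℝ)) ^ 2 ≤
        C * x * Real.log x ^ 3 := by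
  refine ⟨500, by norm_num, fun x hx => ?_⟩
  have hharmonic : (harmonic ⌊4 * x⌋₊ : ℝ) ≤ 5 * Real.log x :=
    (harmonic_floor_le_one_add_log _ (by linarith)).trans (one_add_log_four_mul_le hx)
  have hnonneg : (0 : ℝ) ≤ harmonic ⌊4 * x⌋₊ := by exact_mod_cast harmonic_nonneg _
  calc ∑ n ∈ Icc 1 ⌊4 * x⌋₊, (n.divisors.card : ℝ) ^ 2
      ≤ ⌊4 * x⌋₊ * (harmonic ⌊4 * x⌋₊ : ℝ) ^ 3 := sum_sq_card_divisors_le _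
    _ ≤ 4 * x * (5 * Real.log x) ^ 3 := by
        gcongr
        exact Nat.floor_le (by linarith)
    _ = 500 * x * Real.log x ^ 3 := by ring
end
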